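/- arXiv:2505.03015 — 2 statements merged into one kernel-verified Lean document; each statement's English description precedes it below -/
import Mathlib

section
/- Let R have ACC on right annihilators. If E = [[e,m],[n,f]] is an idempotent endomorphism of R^t = P ⊕ Q such that the endomorphism [[m∘n, (1-e)∘m],[-(n∘e), -(n∘m)]] annihilates an essential submodule of R^t, then this endomorphism lies in the singular ideal Z_r(M_t(R)) = M_t(Z_r(R)), and hence m∘n and n∘m are nilpotent. -/
/-- A submodule is essential if it intersects every nonzero submodule nontrivially. -/
def Submodule.Essential {R M : Type*} [Ring R] [AddCommGroup M] [Module R M]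
    (N : Submodule R M) : Prop :=
  ∀ K : Submodule R M, K ≠ ⊥ → N ⊓ K ≠ ⊥

/-- `N` is essential in `D`. -/
def Submodule.EssentialIn {R M : Type*} [Ring R] [AddCommGroup M] [Module R M]
    (N D : Submodule R M) : Prop :=
  N ≤ D ∧ ∀ K : Submodule R M, K ≤ D → K ≠ ⊥ → N ⊓ K ≠ ⊥

/-- A submodule is fully invariant if every endomorphism maps it into itself. -/
def Submodule.FullyInvariant {R M : Type*} [Ring R] [AddCommGroup M] [Module R M]
    (N : Submodule R M) : Prop :=
  ∀ f : M →ₗ[R] M, N.map f ≤ N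

/-- A module is FI-extending if every fully invariant submodule is essential
in a direct summand. -/
def IsFIExtending (R M : Type*) [Ring R] [AddCommGroup M] [Module R M] : Prop :=
  ∀ N : Submodule R M, N.FullyInvariant →
    ∃ D D' : Submodule R M, IsCompl D D' ∧ N.EssentialIn D

/-- The right annihilator of a subset of a ring, as a right ideal
(submodule of `R` over `Rᵐᵒᵖ`). -/
def rightAnn (R : Type*) [Ring R] (S : Set R) : Submodule Rᵐᵒᵖ R where
  carrier := {x | ∀ s ∈ S, s * x = 0}
  add_mem' := by
    intro a b ha hb s hs
    rw [mul_add, ha s hs, hb s hs, add_zero]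
  zero_mem' := by intro s hs; rw [mul_zero]
  smul_mem' := by
    intro c x hx s hs
    show s * (c • x) = 0
    rw [MulOpposite.smul_eq_mul_unop, ← mul_assoc, hx s hs, zero_mul]

/-- The right singular ideal of a ring: elements whose right annihilator is an
essential right ideal. -/
def rightSingular (R : Type*) [Ring R] : Set R :=
  {r | (rightAnn R {r}).Essential}

/-- ACC on right annihilators: every ascending chain of right annihilator ideals
stabilizes. -/
def ACCRightAnnihilators (R : Type*) [Ring R] : Prop :=
  ∀ c : ℕ → Set R, (Monotone fun i => rightAnn R (c i)) →
    ∃ N, ∀ i, N ≤ i → rightAnn R (c i) = rightAnn R (c N)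

/-- The endomorphism of `M₁ × M₂` given by a 2×2 matrix of homomorphisms. -/
def blockMap {R M1 M2 : Type*} [Ring R] [AddCommGroup M1] [AddCommGroup M2]
    [Module R M1] [Module R M2] (e : M1 →ₗ[R] M1) (m : M2 →ₗ[R] M1)
    (n : M1 →ₗ[R] M2) (f : M2 →ₗ[R] M2) : (M1 × M2) →ₗ[R] (M1 × M2) :=
  ((e ∘ₗ LinearMap.fst R M1 M2) + (m ∘ₗ LinearMap.snd R M1 M2)).prod
    ((n ∘ₗ LinearMap.fst R M1 M2) + (f ∘ₗ LinearMap.snd R M1 M2))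

section Aux
variable {R : Type*} [Ring R]

lemma mem_rightAnn' {S : Set R} {x : R} : x ∈ rightAnn R S ↔ ∀ s ∈ S, s * x = 0 := Iff.rfl

lemma mem_rightAnn_singleton' {a x : R} : x ∈ rightAnn R {a} ↔ a * x = 0 := by
  constructor
  · intro h; exact h a rfl
  · rintro h s rfl; exact h

lemma essential_mono' {M : Type*} [AddCommGroup M] [Module R M] {N N' : Submodule R M}
    (h : N.Essential) (hle : N ≤ N') : N'.Essential := by
  intro K hK hc
  apply h K hK
  rw [eq_bot_iff] at hc ⊢
  exact le_trans (inf_le_inf_right K hle) hc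

lemma rightAnn_singleton_le' {a b : R} (h : ∀ x, a * x = 0 → b * x = 0) :
    rightAnn R {a} ≤ rightAnn R {b} := by
  rintro x hx s rfl
  exact h x (hx a rfl)

lemma singular_mul_left' {a : R} (b : R) (ha : a ∈ rightSingular R) :
    b * a ∈ rightSingular R :=
  essential_mono' ha (rightAnn_singleton_le' fun x hx => by
    rw [mul_assoc, hx, mul_zero])

lemma singular_neg' {a : R} (ha : a ∈ rightSingular R) : -a ∈ rightSingular R :=
  essential_mono' ha (rightAnn_singleton_le' fun x hx => by
    rw [neg_mul, hx, neg_zero])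

lemma exists_rightAnn_max' (hacc : ACCRightAnnihilators R) (T : Set R) (hT : T.Nonempty) :
    ∃ a ∈ T, ∀ b ∈ T, rightAnn R {a} ≤ rightAnn R {b} → rightAnn R {b} = rightAnn R {a} := by
  by_contra h
  push_neg at h
  obtain ⟨a0, ha0⟩ := hT
  have h' : ∀ a : {x // x ∈ T}, ∃ b : {x // x ∈ T},
      rightAnn R {a.1} ≤ rightAnn R {b.1} ∧ rightAnn R {b.1} ≠ rightAnn R {a.1} := by
    rintro ⟨a, ha⟩
    obtain ⟨b, hb, h1, h2⟩ := h a ha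
    exact ⟨⟨b, hb⟩, h1, h2⟩
  choose f hf1 hf2 using h'
  set seq : ℕ → {x // x ∈ T} := fun k => f^[k] ⟨a0, ha0⟩ with hseqdef
  have hseq : ∀ k, seq (k+1) = f (seq k) := fun k => Function.iterate_succ_apply' f k _
  have hmono : Monotone fun i => rightAnn R ({(seq i).1} : Set R) :=
    monotone_nat_of_le_succ (fun k => by rw [hseq]; exact hf1 _)
  obtain ⟨N, hN⟩ := hacc (fun i => {(seq i).1}) hmono
  have hNN := hN (N+1) (Nat.le_succ N)
  rw [hseq] at hNN
  exact hf2 (seq N) hNN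

/-- The set of products of `k` elements of the right singular ideal. -/
def prodSet (R : Type*) [Ring R] (k : ℕ) : Set R :=
  {x | ∃ l : List R, l.length = k ∧ (∀ a ∈ l, a ∈ rightSingular R) ∧ l.prod = x}

lemma lam' (hacc : ACCRightAnnihilators R) :
    ∃ N, ∀ l : List R, l.length = N → (∀ a ∈ l, a ∈ rightSingular R) → l.prod = 0 := by
  have hmono : Monotone fun i => rightAnn R (prodSet R i) := by
    apply monotone_nat_of_le_succ
    intro k x hx
    rintro s ⟨l, hlen, hmem, rfl⟩
    cases l with
    | nil => simp at hlen
    | cons hd tl =>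
      have htl : tl.prod * x = 0 :=
        hx tl.prod ⟨tl, by simpa using hlen, fun a ha => hmem a (List.mem_cons_of_mem _ ha), rfl⟩
      rw [List.prod_cons, mul_assoc, htl, mul_zero]
  obtain ⟨n, hn⟩ := hacc (prodSet R) hmono
  refine ⟨n + 1, ?_⟩
  by_contra hcon
  push_neg at hcon
  obtain ⟨l, hlen, hmem, hne⟩ := hcon
  set T : Set R := {a | a ∈ rightSingular R ∧
    ∃ l' : List R, l'.length = n ∧ (∀ b ∈ l', b ∈ rightSingular R) ∧ l'.prod * a ≠ 0} with hT
  have hTne : T.Nonempty := by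
    rcases l.eq_nil_or_concat with rfl | ⟨l', a, rfl⟩
    · simp at hlen
    · refine ⟨a, hmem a (by simp), l', ?_, fun b hb => hmem b (by simp [hb]), ?_⟩
      · simpa using hlen
      · simpa [List.prod_append] using hne
  obtain ⟨a, ⟨haZ, l0, hl0len, hl0mem, hl0ne⟩, hmax⟩ := exists_rightAnn_max' hacc T hTne
  have ha0 : a ≠ 0 := fun h => hl0ne (by rw [h, mul_zero])
  -- key: for all b in Z, b * a kills all length-n products
  have key : ∀ b ∈ rightSingular R, ∀ l1 : List R, l1.length = n →
      (∀ c ∈ l1, c ∈ rightSingular R) → l1.prod * (b * a) = 0 := by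
    intro b hb l1 hl1len hl1mem
    by_contra hba
    have hbaT : b * a ∈ T := ⟨singular_mul_left' b haZ, l1, hl1len, hl1mem, hba⟩
    have hle : rightAnn R {a} ≤ rightAnn R {b * a} :=
      rightAnn_singleton_le' fun x hx => by rw [mul_assoc, hx, mul_zero]
    have heq := hmax (b * a) hbaT hle
    -- find s with a*s ≠ 0, b*(a*s) = 0
    have hsp : Submodule.span Rᵐᵒᵖ ({a} : Set R) ≠ ⊥ := by
      intro hbot
      have hmem' : a ∈ Submodule.span Rᵐᵒᵖ ({a} : Set R) := Submodule.mem_span_singleton_self a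
      rw [hbot] at hmem'
      exact ha0 (Submodule.mem_bot _ |>.mp hmem')
    obtain ⟨y, hy, hy0⟩ := (Submodule.ne_bot_iff _).mp (hb _ hsp)
    obtain ⟨hy1, hy2⟩ := Submodule.mem_inf.mp hy
    obtain ⟨c, rfl⟩ := Submodule.mem_span_singleton.mp hy2
    have hcs : c • a = a * c.unop := MulOpposite.smul_eq_mul_unop c a
    have hs1 : a * c.unop ≠ 0 := hcs ▸ hy0
    have hs2 : c.unop ∈ rightAnn R {b * a} := by
      rw [mem_rightAnn_singleton', mul_assoc, ← hcs]
      exact mem_rightAnn_singleton'.mp hy1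
    rw [heq, mem_rightAnn_singleton'] at hs2
    exact hs1 hs2
  have haann : a ∈ rightAnn R (prodSet R (n + 1)) := by
    rintro s ⟨l2, hl2len, hl2mem, rfl⟩
    rcases l2.eq_nil_or_concat with rfl | ⟨l3, b, rfl⟩
    · simp at hl2len
    · rw [List.concat_eq_append, List.prod_append, List.prod_singleton, mul_assoc]
      exact key b (hl2mem b (by simp)) l3 (by simpa using hl2len)
        (fun c hc => hl2mem c (by simp [hc]))
  rw [hn (n + 1) (Nat.le_succ n)] at haann
  exact hl0ne (haann l0.prod ⟨l0, hl0len, hl0mem, rfl⟩)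

lemma closure_mul_singular' {k : ℕ} {x z : R}
    (hx : x ∈ AddSubmonoid.closure (prodSet R k)) (hz : z ∈ rightSingular R) :
    x * z ∈ AddSubmonoid.closure (prodSet R (k + 1)) := by
  induction hx using AddSubmonoid.closure_induction with
  | mem p hp =>
    obtain ⟨l, hlen, hmem, rfl⟩ := hp
    refine AddSubmonoid.subset_closure ⟨l ++ [z], by simp [hlen], ?_, by
      rw [List.prod_append, List.prod_singleton]⟩
    intro a ha
    rcases List.mem_append.mp ha with h | h
    · exact hmem a h
    · rw [List.mem_singleton.mp h]; exact hz
  | zero => rw [zero_mul]; exact zero_mem _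
  | add u v hu hv ihu ihv => rw [add_mul]; exact add_mem ihu ihv

lemma matrix_pow_zero' {ι : Type*} [Fintype ι] [DecidableEq ι] (B : Matrix ι ι R)
    (hB : ∀ i j, B i j ∈ rightSingular R) {N : ℕ}
    (hN : ∀ l : List R, l.length = N → (∀ a ∈ l, a ∈ rightSingular R) → l.prod = 0) :
    B ^ N = 0 := by
  have key : ∀ k i j, (B ^ k) i j ∈ AddSubmonoid.closure (prodSet R k) := by
    intro k
    induction k with
    | zero =>
      intro i j
      rw [pow_zero]
      by_cases h : i = j
      · subst h
        rw [Matrix.one_apply_eq]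
        exact AddSubmonoid.subset_closure ⟨[], rfl, by simp, List.prod_nil⟩
      · rw [Matrix.one_apply_ne h]; exact zero_mem _
    | succ k ih =>
      intro i j
      rw [pow_succ, Matrix.mul_apply]
      exact AddSubmonoid.sum_mem _ fun t _ => closure_mul_singular' (ih i t) (hB t j)
  ext i j
  have h1 : AddSubmonoid.closure (prodSet R N) ≤ ⊥ := by
    rw [AddSubmonoid.closure_le]
    rintro x ⟨l, hlen, hmem, rfl⟩
    simpa using hN l hlen hmem
  simpa using h1 (key N i j)

end Aux

/-- Under ACC on right annihilators, if the block matrix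
`[[mn,(1-e)m],[-ne,-nm]]` coming from an idempotent `E = [[e,m],[n,f]]`
annihilates an essential submodule of the free right module, then it lies in
the right singular ideal of the matrix ring and `mn`, `nm` are nilpotent. -/
theorem block_in_singular_and_nilpotent (R : Type*) [Ring R]
    (hacc : ACCRightAnnihilators R) (p q : ℕ)
    (e : Matrix (Fin p) (Fin p) R) (m : Matrix (Fin p) (Fin q) R)
    (n : Matrix (Fin q) (Fin p) R) (f : Matrix (Fin q) (Fin q) R)
    (hE : Matrix.fromBlocks e m n f * Matrix.fromBlocks e m n f =
      Matrix.fromBlocks e m n f)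
    (K : Submodule Rᵐᵒᵖ ((Fin p ⊕ Fin q) → R)) (hK : K.Essential)
    (hann : ∀ x ∈ K,
      (Matrix.fromBlocks (m * n) ((1 - e) * m) (-(n * e)) (-(n * m))).mulVec x = 0) :
    Matrix.fromBlocks (m * n) ((1 - e) * m) (-(n * e)) (-(n * m)) ∈
        rightSingular (Matrix (Fin p ⊕ Fin q) (Fin p ⊕ Fin q) R) ∧
      IsNilpotent (m * n) ∧ IsNilpotent (n * m) := by
  classical
  set A := Matrix.fromBlocks (m * n) ((1 - e) * m) (-(n * e)) (-(n * m)) with hA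
  -- Step 1: every entry of A is in the singular ideal of R
  have hentry : ∀ i j, A i j ∈ rightSingular R := by
    intro i j
    show (rightAnn R {A i j}).Essential
    intro L hL
    obtain ⟨r, hrL, hr0⟩ := (Submodule.ne_bot_iff L).mp hL
    set x : (Fin p ⊕ Fin q) → R := Pi.single j r with hxdef
    have hx0 : x ≠ 0 := by
      intro h
      apply hr0
      have h1 := congrFun h j
      simpa [hxdef] using h1
    have hsp : Submodule.span Rᵐᵒᵖ ({x} : Set _) ≠ ⊥ := by
      intro hbot
      have hmem' : x ∈ Submodule.span Rᵐᵒᵖ ({x} : Set _) := Submodule.mem_span_singleton_self x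
      rw [hbot] at hmem'
      exact hx0 (Submodule.mem_bot _ |>.mp hmem')
    obtain ⟨w, hw, hw0⟩ := (Submodule.ne_bot_iff _).mp (hK _ hsp)
    obtain ⟨hwK, hwsp⟩ := Submodule.mem_inf.mp hw
    obtain ⟨c, rfl⟩ := Submodule.mem_span_singleton.mp hwsp
    have hcs : c • x = Pi.single j (r * c.unop) := by
      ext i'
      by_cases h : i' = j
      · subst h
        simp [hxdef, MulOpposite.smul_eq_mul_unop]
      · simp [hxdef, Pi.single_eq_of_ne h, MulOpposite.smul_eq_mul_unop]
    have hrs0 : r * c.unop ≠ 0 := by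
      intro h
      apply hw0
      rw [hcs, h, Pi.single_zero]
    have hAij : A i j * (r * c.unop) = 0 := by
      have h1 := congrFun (hann _ hwK) i
      rw [hcs, Matrix.mulVec_single] at h1
      simpa using h1
    refine (Submodule.ne_bot_iff _).mpr
      ⟨r * c.unop, Submodule.mem_inf.mpr ⟨mem_rightAnn_singleton'.mpr hAij, ?_⟩, hrs0⟩
    have h2 := L.smul_mem c hrL
    rwa [MulOpposite.smul_eq_mul_unop] at h2
  -- Step 2: A is in the singular ideal of the matrix ring
  have hsing : A ∈ rightSingular (Matrix (Fin p ⊕ Fin q) (Fin p ⊕ Fin q) R) := by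
    show (rightAnn _ {A}).Essential
    intro K' hK'
    obtain ⟨X, hXK, hX0⟩ := (Submodule.ne_bot_iff K').mp hK'
    obtain ⟨i0, j0, hij⟩ : ∃ i j, X i j ≠ 0 := by
      by_contra h
      push_neg at h
      exact hX0 (by ext i j; simpa using h i j)
    -- the column space of X
    let W : Submodule Rᵐᵒᵖ ((Fin p ⊕ Fin q) → R) :=
      { carrier := {v | ∃ r, X.mulVec r = v}
        add_mem' := by
          rintro v w ⟨r, rfl⟩ ⟨s, rfl⟩
          exact ⟨r + s, Matrix.mulVec_add X r s⟩
        zero_mem' := ⟨0, Matrix.mulVec_zero X⟩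
        smul_mem' := by
          rintro c v ⟨r, rfl⟩
          refine ⟨c • r, ?_⟩
          ext i
          simp [Matrix.mulVec, dotProduct, MulOpposite.smul_eq_mul_unop,
            Finset.sum_mul, mul_assoc] }
    have hWne : W ≠ ⊥ := by
      intro h
      have hmem : X.mulVec (Pi.single j0 1) ∈ W := ⟨_, rfl⟩
      rw [h] at hmem
      have h1 := Submodule.mem_bot _ |>.mp hmem
      have h2 := congrFun h1 i0
      rw [Matrix.mulVec_single] at h2
      simp at h2
      exact hij h2
    obtain ⟨v, hv, hv0⟩ := (Submodule.ne_bot_iff _).mp (hK W hWne)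
    obtain ⟨hvK, hvW⟩ := Submodule.mem_inf.mp hv
    obtain ⟨r, hr⟩ := hvW
    -- multiply X by the matrix with column j0 equal to r
    have hXY : ∀ k l, (X * Matrix.of fun k' l' => if l' = j0 then r k' else 0) k l
        = if l = j0 then v k else 0 := by
      intro k l
      rw [Matrix.mul_apply]
      by_cases hl : l = j0
      · simp only [Matrix.of_apply, hl, if_true]
        rw [← hr]
        simp [Matrix.mulVec, dotProduct]
      · simp [Matrix.of_apply, hl]
    have key : ∃ Z0, Z0 ∈ K' ∧ Z0 ≠ 0 ∧ A * Z0 = 0 := by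
      refine ⟨X * Matrix.of (fun k' l' => if l' = j0 then r k' else 0), ?_, ?_, ?_⟩
      · have h2 := K'.smul_mem (MulOpposite.op (Matrix.of
          (fun k' l' => if l' = j0 then r k' else 0))) hXK
        rwa [MulOpposite.smul_eq_mul_unop, MulOpposite.unop_op] at h2
      · obtain ⟨k0, hk0⟩ : ∃ k, v k ≠ 0 := by
          by_contra h
          push_neg at h
          exact hv0 (funext h)
        intro h0
        apply hk0
        have h2 := hXY k0 j0
        rw [h0] at h2
        simpa using h2.symm
      · ext i l
        rw [Matrix.mul_apply]
        simp only [hXY]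
        have hAv := congrFun (hann v hvK) i
        by_cases hl : l = j0
        · simp only [hl, if_true]
          simpa [Matrix.mulVec, dotProduct] using hAv
        · simp [hl]
    obtain ⟨Z0, hZ0K, hZ0ne, hZ0ann⟩ := key
    exact (Submodule.ne_bot_iff _).mpr
      ⟨Z0, Submodule.mem_inf.mpr ⟨mem_rightAnn_singleton'.mpr hZ0ann, hZ0K⟩, hZ0ne⟩
  -- Step 3: nilpotency via Lam's theorem
  obtain ⟨N, hN⟩ := lam' hacc
  refine ⟨hsing, ⟨N, ?_⟩, ⟨N, ?_⟩⟩
  · refine matrix_pow_zero' _ (fun i j => ?_) hN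
    have h1 := hentry (Sum.inl i) (Sum.inl j)
    rw [hA] at h1
    simpa [Matrix.fromBlocks_apply₁₁] using h1
  · refine matrix_pow_zero' _ (fun i j => ?_) hN
    have h1 := hentry (Sum.inr i) (Sum.inr j)
    rw [hA] at h1
    have h2 := singular_neg' h1
    simpa [Matrix.fromBlocks_apply₂₂, Matrix.neg_apply] using h2
end

section
/- Let S = End_R(P ⊕ Q) and let E = [[e,m],[n,f]] be an idempotent in S with (mn)^k = (nm)^k = 0 for some positive integer k. Then S decomposes as the internal direct sum of right ideals S = diag(e^{2k+1}, f^{2k+1})·S ⊕ (1 - E)·S. -/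
section BlockAux
variable {R M1 M2 : Type*} [Ring R] [AddCommGroup M1] [AddCommGroup M2]
  [Module R M1] [Module R M2]

lemma blockMap_apply' (e : M1 →ₗ[R] M1) (m : M2 →ₗ[R] M1)
    (n : M1 →ₗ[R] M2) (f : M2 →ₗ[R] M2) (x : M1 × M2) :
    blockMap e m n f x = (e x.1 + m x.2, n x.1 + f x.2) := rfl

lemma blockMap_congr {e e' : M1 →ₗ[R] M1} {m m' : M2 →ₗ[R] M1}
    {n n' : M1 →ₗ[R] M2} {f f' : M2 →ₗ[R] M2}
    (h1 : e = e') (h2 : m = m') (h3 : n = n') (h4 : f = f') :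
    blockMap e m n f = blockMap e' m' n' f' := by rw [h1, h2, h3, h4]

lemma blockMap_mul (e e' : M1 →ₗ[R] M1) (m m' : M2 →ₗ[R] M1)
    (n n' : M1 →ₗ[R] M2) (f f' : M2 →ₗ[R] M2) :
    blockMap e m n f * blockMap e' m' n' f' =
      blockMap (e ∘ₗ e' + m ∘ₗ n') (e ∘ₗ m' + m ∘ₗ f')
        (n ∘ₗ e' + f ∘ₗ n') (n ∘ₗ m' + f ∘ₗ f') := by
  apply LinearMap.ext; intro x
  simp only [Module.End.mul_apply, blockMap_apply', LinearMap.add_apply,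
    LinearMap.comp_apply, map_add, Prod.mk.injEq]
  constructor <;> abel

lemma blockMap_one : (blockMap 1 0 0 1 : (M1 × M2) →ₗ[R] (M1 × M2)) = 1 := by
  apply LinearMap.ext; intro x
  simp [blockMap_apply']

lemma blockMap_inj {e e' : M1 →ₗ[R] M1} {m m' : M2 →ₗ[R] M1}
    {n n' : M1 →ₗ[R] M2} {f f' : M2 →ₗ[R] M2}
    (H : blockMap e m n f = blockMap e' m' n' f') :
    e = e' ∧ m = m' ∧ n = n' ∧ f = f' := by
  refine ⟨?_, ?_, ?_, ?_⟩ <;> apply LinearMap.ext <;> intro x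
  · have := congrArg (fun g => (g (x, 0)).1) H; simpa [blockMap_apply'] using this
  · have := congrArg (fun g => (g (0, x)).1) H; simpa [blockMap_apply'] using this
  · have := congrArg (fun g => (g (x, 0)).2) H; simpa [blockMap_apply'] using this
  · have := congrArg (fun g => (g (0, x)).2) H; simpa [blockMap_apply'] using this

lemma pow_comp_eq (α : M1 →ₗ[R] M1) (β : M2 →ₗ[R] M2) (m : M2 →ₗ[R] M1)
    (hc : α ∘ₗ m = m ∘ₗ β) : ∀ j, (α ^ j) ∘ₗ m = m ∘ₗ (β ^ j) := by
  intro j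
  induction j with
  | zero => simp [pow_zero, Module.End.one_eq_id]
  | succ j ih =>
    rw [pow_succ', pow_succ', Module.End.mul_eq_comp, Module.End.mul_eq_comp,
      LinearMap.comp_assoc, ih, ← LinearMap.comp_assoc, hc, LinearMap.comp_assoc]

end BlockAux

section RingAux
variable {A : Type*} [Ring A]

lemma pow_eq_add_mul (a : A) : ∀ N : ℕ, ∃ c, a ^ (N + 1) = a + (a ^ 2 - a) * c ∧ Commute a c
  | 0 => ⟨0, by simp, Commute.zero_right a⟩
  | N + 1 => by
    obtain ⟨c, hc, hcomm⟩ := pow_eq_add_mul a N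
    refine ⟨1 + a * c, ?_, ?_⟩
    · rw [pow_succ', hc]; noncomm_ring
    · exact (Commute.one_right a).add_right ((Commute.refl a).mul_right hcomm)

lemma one_sub_pow_eq (a : A) : ∀ j : ℕ, ∃ q, (1 - a) ^ j = 1 - a * q ∧ Commute a q
  | 0 => ⟨0, by simp, Commute.zero_right a⟩
  | j + 1 => by
    obtain ⟨q, hq, hcomm⟩ := one_sub_pow_eq a j
    refine ⟨q + 1 - a * q, ?_, ?_⟩
    · rw [pow_succ', hq]; noncomm_ring
    · exact (hcomm.add_right (Commute.one_right a)).sub_right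
        ((Commute.refl a).mul_right hcomm)

lemma aeval_congr (a : A) {p q : Polynomial ℤ} (hpq : p = q) :
    (Polynomial.aeval a) p = (Polynomial.aeval a) q := congrArg _ hpq

lemma pow_shrink (a : A) (k : ℕ) (ht : (a - a ^ 2) ^ k = 0) :
    ∃ c, a ^ (2 * k + 1) = c * a ^ (4 * k + 3) := by
  obtain ⟨q, hq, hcq⟩ := one_sub_pow_eq a k
  have h1 : a ^ k * (1 - a) ^ k = 0 := by
    have hcomm : Commute a (1 - a) :=
      (Commute.one_right a).sub_right (Commute.refl a)
    have hmul : a * (1 - a) = a - a ^ 2 := by noncomm_ring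
    rw [← hcomm.mul_pow, hmul, ht]
  have h2 : a ^ k = a ^ (k + 1) * q := by
    rw [hq, mul_sub, mul_one, sub_eq_zero] at h1
    rw [h1, ← mul_assoc, ← pow_succ]
  have key : ∀ j, a ^ k = a ^ (k + j) * q ^ j := by
    intro j
    induction j with
    | zero => simp
    | succ j ih =>
      have step : a ^ (k + j) = a ^ (k + j + 1) * q := by
        have : a ^ (k + j) = a ^ j * a ^ k := by
          rw [← pow_add]; ring_nf
        rw [this, h2, ← mul_assoc, ← pow_add]; ring_nf
      have e0 : k + (j + 1) = k + j + 1 := by omega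
      rw [ih, step, mul_assoc, ← pow_succ', e0]
  refine ⟨q ^ (2 * k + 2), ?_⟩
  have e1 : a ^ (2 * k + 1) = a ^ (k + 1) * a ^ k := by rw [← pow_add]; ring_nf
  rw [e1, key (2 * k + 2), ← mul_assoc, ← pow_add]
  have e2 : k + 1 + (k + (2 * k + 2)) = 4 * k + 3 := by ring
  rw [e2, ← (hcq.pow_pow (4 * k + 3) (2 * k + 2)).eq]

lemma unit_aux (a : A) (k : ℕ) (ht : (a - a ^ 2) ^ k = 0) :
    ∃ v, (a ^ (2 * k + 2) + (1 - a) ^ (2 * k + 2)) * v = 1 ∧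
      v * (a ^ (2 * k + 2) + (1 - a) ^ (2 * k + 2)) = 1 := by
  obtain ⟨c₁, h₁, hc₁⟩ := pow_eq_add_mul a (2 * k + 1)
  obtain ⟨c₂, h₂, hc₂⟩ := pow_eq_add_mul (1 - a) (2 * k + 1)
  have hc₂' : Commute a c₂ := by
    have := (Commute.one_left c₂).sub_left hc₂
    simpa using this
  have hexp : 2 * k + 2 = 2 * k + 1 + 1 := by omega
  have hu : a ^ (2 * k + 2) + (1 - a) ^ (2 * k + 2) = 1 + (a ^ 2 - a) * (c₁ + c₂) := by
    rw [hexp, h₁, h₂]; noncomm_ring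
  have hccomm : Commute (a ^ 2 - a) (c₁ + c₂) := by
    have h3 : Commute a (c₁ + c₂) := hc₁.add_right hc₂'
    exact (h3.pow_left 2).sub_left h3
  have hnil : ((a ^ 2 - a) * (c₁ + c₂)) ^ k = 0 := by
    rw [hccomm.mul_pow]
    have : (a ^ 2 - a) ^ k = 0 := by
      have : a ^ 2 - a = -(a - a ^ 2) := by ring_nf; noncomm_ring
      rw [this, neg_pow, ht, mul_zero]
    rw [this, zero_mul]
  have hU : IsUnit (1 + (a ^ 2 - a) * (c₁ + c₂)) :=
    IsNilpotent.isUnit_one_add ⟨k, hnil⟩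
  obtain ⟨u, hueq⟩ := hU
  exact ⟨↑u⁻¹, by rw [hu, ← hueq]; exact u.mul_inv, by rw [hu, ← hueq]; exact u.inv_mul⟩

end RingAux

/-- The endomorphism ring of `P ⊕ Q` decomposes as the internal direct sum of
right ideals `diag(e^(2k+1),f^(2k+1))·S ⊕ (1-E)·S`. -/
theorem end_ring_decomposition (R P Q : Type*) [Ring R] [AddCommGroup P]
    [AddCommGroup Q] [Module Rᵐᵒᵖ P] [Module Rᵐᵒᵖ Q]
    (e : P →ₗ[Rᵐᵒᵖ] P) (m : Q →ₗ[Rᵐᵒᵖ] P)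
    (n : P →ₗ[Rᵐᵒᵖ] Q) (f : Q →ₗ[Rᵐᵒᵖ] Q)
    (E : Module.End Rᵐᵒᵖ (P × Q)) (hEdef : E = blockMap e m n f)
    (hE : E * E = E)
    (k : ℕ) (hk : 0 < k) (hmn : (m ∘ₗ n) ^ k = 0) (hnm : (n ∘ₗ m) ^ k = 0)
    (h : Module.End Rᵐᵒᵖ (P × Q))
    (hdef : h = blockMap (e ^ (2 * k + 1)) 0 0 (f ^ (2 * k + 1))) :
    (∀ s : Module.End Rᵐᵒᵖ (P × Q), ∃ a b, s = h * a + (1 - E) * b) ∧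
      ∀ a b : Module.End Rᵐᵒᵖ (P × Q), h * a = (1 - E) * b → h * a = 0 := by
  have hmul := hE
  rw [hEdef, blockMap_mul] at hmul
  obtain ⟨h11, h12, h21, h22⟩ := blockMap_inj hmul
  have hme : e ∘ₗ m = m ∘ₗ (1 - f) := by
    rw [LinearMap.comp_sub, Module.End.one_eq_id, LinearMap.comp_id]
    exact eq_sub_of_add_eq h12
  have hnf : f ∘ₗ n = n ∘ₗ (1 - e) := by
    rw [LinearMap.comp_sub, Module.End.one_eq_id, LinearMap.comp_id]
    exact eq_sub_of_add_eq' h21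
  have hmn2 : m ∘ₗ n = e - e ^ 2 := by
    have h' : e ∘ₗ e = e ^ 2 := by rw [pow_two]; rfl
    rw [← h']
    exact eq_sub_of_add_eq' h11
  have hnm2 : n ∘ₗ m = f - f ^ 2 := by
    have h' : f ∘ₗ f = f ^ 2 := by rw [pow_two]; rfl
    rw [← h']
    exact eq_sub_of_add_eq h22
  have hte : (e - e ^ 2) ^ k = 0 := by rw [← hmn2]; exact hmn
  have htf : (f - f ^ 2) ^ k = 0 := by rw [← hnm2]; exact hnm
  have hmj := pow_comp_eq e (1 - f) m hme
  have hnj := pow_comp_eq f (1 - e) n hnf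
  obtain ⟨ve, hve1, hve2⟩ := unit_aux e k hte
  obtain ⟨vf, hvf1, hvf2⟩ := unit_aux f k htf
  have key2 : E * h * E = blockMap (e ∘ₗ (e ^ (2*k+2) + (1-e) ^ (2*k+2)))
      (m ∘ₗ (f ^ (2*k+2) + (1-f) ^ (2*k+2)))
      (n ∘ₗ (e ^ (2*k+2) + (1-e) ^ (2*k+2)))
      (f ∘ₗ (f ^ (2*k+2) + (1-f) ^ (2*k+2))) := by
    rw [hEdef, hdef, blockMap_mul, blockMap_mul]
    simp only [LinearMap.comp_zero, LinearMap.zero_comp, add_zero, zero_add]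
    apply blockMap_congr
    · have g1 : (m ∘ₗ f ^ (2*k+1)) ∘ₗ n = (e - e ^ 2) * (1 - e) ^ (2*k+1) := by
        rw [LinearMap.comp_assoc, hnj, ← LinearMap.comp_assoc, hmn2,
          ← Module.End.mul_eq_comp]
      show e * e ^ (2*k+1) * e + (m ∘ₗ f ^ (2*k+1)) ∘ₗ n
          = e * (e ^ (2*k+2) + (1-e) ^ (2*k+2))
      rw [g1, mul_assoc e (e ^ (2*k+1)) e, ← pow_succ e (2*k+1),
        show e - e ^ 2 = e * (1 - e) by noncomm_ring,
        mul_assoc e (1-e) ((1-e) ^ (2*k+1)), ← pow_succ' (1-e) (2*k+1),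
        show 2*k+1+1 = 2*k+2 by omega,
        mul_add e (e ^ (2*k+2)) ((1-e) ^ (2*k+2))]
    · have g2 : (e ∘ₗ e ^ (2*k+1)) ∘ₗ m = m ∘ₗ (1-f) ^ (2*k+2) := by
        have h' : (e ∘ₗ e ^ (2*k+1)) = e ^ (2*k+2) := by
          show e * e ^ (2*k+1) = _
          rw [← pow_succ' e (2*k+1), show 2*k+1+1 = 2*k+2 by omega]
        rw [h', hmj]
      have g3 : (m ∘ₗ f ^ (2*k+1)) ∘ₗ f = m ∘ₗ f ^ (2*k+2) := by
        have hpf : f ^ (2*k+1) * f = f ^ (2*k+2) := by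
          rw [← pow_succ f (2*k+1), show 2*k+1+1 = 2*k+2 by omega]
        rw [LinearMap.comp_assoc, show (f ^ (2*k+1)) ∘ₗ f = f ^ (2*k+2) from hpf]
      rw [g2, g3, ← LinearMap.comp_add, add_comm ((1-f) ^ (2*k+2)) (f ^ (2*k+2))]
    · have g2 : (n ∘ₗ e ^ (2*k+1)) ∘ₗ e = n ∘ₗ e ^ (2*k+2) := by
        have hpe : e ^ (2*k+1) * e = e ^ (2*k+2) := by
          rw [← pow_succ e (2*k+1), show 2*k+1+1 = 2*k+2 by omega]
        rw [LinearMap.comp_assoc, show (e ^ (2*k+1)) ∘ₗ e = e ^ (2*k+2) from hpe]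
      have g3 : (f ∘ₗ f ^ (2*k+1)) ∘ₗ n = n ∘ₗ (1-e) ^ (2*k+2) := by
        have h' : (f ∘ₗ f ^ (2*k+1)) = f ^ (2*k+2) := by
          show f * f ^ (2*k+1) = _
          rw [← pow_succ' f (2*k+1), show 2*k+1+1 = 2*k+2 by omega]
        rw [h', hnj]
      rw [g2, g3, ← LinearMap.comp_add]
    · have g1 : (n ∘ₗ e ^ (2*k+1)) ∘ₗ m = (f - f ^ 2) * (1 - f) ^ (2*k+1) := by
        rw [LinearMap.comp_assoc, hmj, ← LinearMap.comp_assoc, hnm2,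
          ← Module.End.mul_eq_comp]
      show (n ∘ₗ e ^ (2*k+1)) ∘ₗ m + f * f ^ (2*k+1) * f
          = f * (f ^ (2*k+2) + (1-f) ^ (2*k+2))
      rw [g1, mul_assoc f (f ^ (2*k+1)) f, ← pow_succ f (2*k+1),
        show f - f ^ 2 = f * (1 - f) by noncomm_ring,
        mul_assoc f (1-f) ((1-f) ^ (2*k+1)), ← pow_succ' (1-f) (2*k+1),
        show 2*k+1+1 = 2*k+2 by omega,
        mul_add f (f ^ (2*k+2)) ((1-f) ^ (2*k+2)), add_comm ((f:Module.End Rᵐᵒᵖ Q) * f ^ (2*k+2)) (f * (1-f) ^ (2*k+2))]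
    -- note: goal4 LHS order is mixed + diag; adjust handled above
  set V : Module.End Rᵐᵒᵖ (P × Q) := blockMap ve 0 0 vf with hV
  have hUV : blockMap (e ^ (2*k+2) + (1-e) ^ (2*k+2)) (0 : Q →ₗ[Rᵐᵒᵖ] P)
      (0 : P →ₗ[Rᵐᵒᵖ] Q) (f ^ (2*k+2) + (1-f) ^ (2*k+2)) * V = 1 := by
    rw [hV, blockMap_mul]
    simp only [LinearMap.comp_zero, LinearMap.zero_comp, add_zero, zero_add]
    rw [show (e ^ (2*k+2) + (1-e) ^ (2*k+2)) ∘ₗ ve = 1 from hve1,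
      show (f ^ (2*k+2) + (1-f) ^ (2*k+2)) ∘ₗ vf = 1 from hvf1, blockMap_one]
  have key2b : E * h * E = E * blockMap (e ^ (2*k+2) + (1-e) ^ (2*k+2)) 0 0
      (f ^ (2*k+2) + (1-f) ^ (2*k+2)) := by
    rw [key2]
    conv_rhs => rw [hEdef, blockMap_mul]
    simp only [LinearMap.comp_zero, LinearMap.zero_comp, add_zero, zero_add]
  have key : E * h * (E * V) = E := by
    have h' : E * h * (E * V) = (E * h * E) * V := by rw [mul_assoc (E*h) E V]
    rw [h', key2b, mul_assoc, hUV, mul_one]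
  constructor
  · intro s
    refine ⟨E * V * s, (1 - h * (E * V)) * s, ?_⟩
    have e3 : E * (h * (E * V) * s) = E * s := by
      calc E * (h * (E * V) * s) = (E * h * (E * V)) * s := by
            rw [← mul_assoc, ← mul_assoc]
        _ = E * s := by rw [key]
    calc s = h * (E * V * s) + (s - h * (E * V * s)) := by rw [add_sub_cancel]
      _ = h * (E * V * s) + (1 - E) * ((1 - h * (E * V)) * s) := by
          congr 1
          rw [sub_mul, one_mul, sub_mul, one_mul, mul_sub, e3, mul_assoc,
            mul_assoc]
          abel
  · intro a b hab
    have h0 : E * (1 - E) = 0 := by rw [mul_sub, mul_one, hE, sub_self]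
    have h1 : E * (h * a) = 0 := by rw [hab, ← mul_assoc, h0, zero_mul]
    have h2 : h * E * h * a = 0 := by
      have h' : h * E * h * a = h * (E * (h * a)) := by noncomm_ring
      rw [h', h1, mul_zero]
    obtain ⟨ce, hce⟩ := pow_shrink e k hte
    obtain ⟨cf, hcf⟩ := pow_shrink f k htf
    have key3 : h * E * h = blockMap (e ^ (4*k+3)) 0 0 (f ^ (4*k+3)) := by
      rw [hdef, hEdef, blockMap_mul, blockMap_mul]
      simp only [LinearMap.comp_zero, LinearMap.zero_comp, add_zero, zero_add]
      apply blockMap_congr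
      · show e ^ (2*k+1) * e * e ^ (2*k+1) = e ^ (4*k+3)
        rw [← pow_succ e (2*k+1), ← pow_add e (2*k+1+1) (2*k+1),
          show 2*k+1+1+(2*k+1) = 4*k+3 by omega]
      · rw [hmj (2*k+1), LinearMap.comp_assoc]
        have hz : ((1-f) ^ (2*k+1)) ∘ₗ (f ^ (2*k+1)) = 0 := by
          show (1-f) ^ (2*k+1) * f ^ (2*k+1) = 0
          have hcomm : Commute (1-f) f := (Commute.one_left f).sub_left (Commute.refl f)
          rw [← hcomm.mul_pow, show (1-f) * f = f - f ^ 2 by noncomm_ring]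
          exact pow_eq_zero_of_le (by omega) htf
        rw [hz, LinearMap.comp_zero]
      · rw [hnj (2*k+1), LinearMap.comp_assoc]
        have hz : ((1-e) ^ (2*k+1)) ∘ₗ (e ^ (2*k+1)) = 0 := by
          show (1-e) ^ (2*k+1) * e ^ (2*k+1) = 0
          have hcomm : Commute (1-e) e := (Commute.one_left e).sub_left (Commute.refl e)
          rw [← hcomm.mul_pow, show (1-e) * e = e - e ^ 2 by noncomm_ring]
          exact pow_eq_zero_of_le (by omega) hte
        rw [hz, LinearMap.comp_zero]
      · show f ^ (2*k+1) * f * f ^ (2*k+1) = f ^ (4*k+3)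
        rw [← pow_succ f (2*k+1), ← pow_add f (2*k+1+1) (2*k+1),
          show 2*k+1+1+(2*k+1) = 4*k+3 by omega]
    have hfact : h = blockMap ce (0 : Q →ₗ[Rᵐᵒᵖ] P) (0 : P →ₗ[Rᵐᵒᵖ] Q) cf
        * (h * E * h) := by
      rw [key3, hdef, blockMap_mul]
      simp only [LinearMap.comp_zero, LinearMap.zero_comp, add_zero, zero_add]
      exact blockMap_congr hce rfl rfl hcf
    calc h * a = (blockMap ce 0 0 cf * (h * E * h)) * a := by rw [← hfact]
      _ = blockMap ce 0 0 cf * (h * E * h * a) := by rw [mul_assoc]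
      _ = 0 := by rw [h2, mul_zero]
end
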